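/- Let G be a group and e ∈ G such that the conjugacy class C = cl_G(e) = { g * e * g⁻¹ | g ∈ G } is finite. Then the following are equivalent: (i) there exists c ∈ C whose left translation L_c contains a regular cycle; (ii) there exist c, z ∈ C such that for all k ∈ ℤ, if c^k * z = z * c^k then c^k commutes with every element of C; (iii) for every c ∈ C there exists z ∈ C such that for all k ∈ ℤ, if c^k * z = z * c^k then c^k commutes with every element of C; (iv) for every c ∈ C, the left translation L_c contains a regular cycle. -/
import Mathlib


/-- The conjugacy class of `e` in `G`. -/
def conjClass {G : Type*} [Group G] (e : G) : Set G := {x | ∃ g : G, g * e * g⁻¹ = x}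

/-- The left translation `L_c : x ↦ c * x * c⁻¹` on a conjugacy class. -/
def classTrans {G : Type*} [Group G] {e : G} (c : conjClass e) :
    Equiv.Perm (conjClass e) where
  toFun x := ⟨c * x * (c : G)⁻¹, by
    obtain ⟨g, hg⟩ := x.2
    exact ⟨(c : G) * g, by rw [← hg]; group⟩⟩
  invFun x := ⟨(c : G)⁻¹ * x * c, by
    obtain ⟨g, hg⟩ := x.2
    exact ⟨(c : G)⁻¹ * g, by rw [← hg]; group⟩⟩
  left_inv x := Subtype.ext (by group)
  right_inv x := Subtype.ext (by group)

/-- A permutation contains a regular cycle if some cycle's length (the minimal period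
of one of its points) is divisible by the length of every cycle. -/
def ContainsRegularCycle {Q : Type*} (π : Equiv.Perm Q) : Prop :=
  ∃ z : Q, ∀ x : Q, Function.minimalPeriod (⇑π) x ∣ Function.minimalPeriod (⇑π) z

section Aux

variable {G : Type*} [Group G] {e : G}

lemma classTrans_coe (c x : conjClass e) :
    ((classTrans c x : conjClass e) : G) = (c : G) * x * (c : G)⁻¹ := rfl

lemma classTrans_iterate (c x : conjClass e) (n : ℕ) :
    (((classTrans c)^[n] x : conjClass e) : G) = (c : G) ^ n * x * ((c : G) ^ n)⁻¹ := by
  induction n with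
  | zero => simp
  | succ n ih =>
    rw [Function.iterate_succ_apply', classTrans_coe, ih]
    group

lemma iterate_eq_iff (c x : conjClass e) (n : ℕ) :
    (classTrans c)^[n] x = x ↔ (c : G) ^ n * x = (x : G) * (c : G) ^ n := by
  rw [Subtype.ext_iff, classTrans_iterate, mul_inv_eq_iff_eq_mul]

lemma period_pos (hfin : (conjClass e).Finite) (c x : conjClass e) :
    0 < Function.minimalPeriod ⇑(classTrans c) x := by
  have : Finite (conjClass e) := hfin.to_subtype
  have h : Function.IsPeriodicPt ⇑(classTrans c) (orderOf (classTrans c)) x := by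
    show ((classTrans c)^[orderOf (classTrans c)]) x = x
    rw [Equiv.Perm.iterate_eq_pow, pow_orderOf_eq_one]
    rfl
  exact h.minimalPeriod_pos (orderOf_pos _)

lemma commute_zpow_iff (hfin : (conjClass e).Finite) (c x : conjClass e) (k : ℤ) :
    (c : G) ^ k * x = (x : G) * (c : G) ^ k ↔
      ((Function.minimalPeriod ⇑(classTrans c) x : ℤ)) ∣ k := by
  set m := Function.minimalPeriod ⇑(classTrans c) x with hm
  have hmpos : 0 < m := period_pos hfin c x
  have hcm : Commute ((c : G) ^ (m : ℤ)) (x : G) := by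
    have hp := Function.isPeriodicPt_minimalPeriod ⇑(classTrans c) x
    have h := (iterate_eq_iff c x m).mp hp
    rw [zpow_natCast]; exact h
  constructor
  · intro hk
    have hcomm : Commute ((c : G) ^ k) (x : G) := hk
    have hr : Commute ((c : G) ^ (k % (m : ℤ))) (x : G) := by
      have hdef : (k % (m : ℤ)) = k - (m : ℤ) * (k / (m : ℤ)) := Int.emod_def k m
      rw [hdef, zpow_sub, zpow_mul]
      exact Commute.mul_left hcomm ((hcm.zpow_left _).inv_left)
    have h0 : (0 : ℤ) ≤ k % (m : ℤ) := Int.emod_nonneg k (by exact_mod_cast hmpos.ne')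
    have hlt : k % (m : ℤ) < (m : ℤ) := Int.emod_lt_of_pos k (by exact_mod_cast hmpos)
    set r : ℕ := (k % (m : ℤ)).toNat with hrdef
    have hrk : ((r : ℤ)) = k % (m : ℤ) := Int.toNat_of_nonneg h0
    have hrlt : r < m := by omega
    have hrc : Commute ((c : G) ^ r) (x : G) := by
      have := hr
      rw [← hrk, zpow_natCast] at this
      exact this
    have hper : Function.IsPeriodicPt ⇑(classTrans c) r x := (iterate_eq_iff c x r).mpr hrc
    have hr0 : r = 0 := by
      by_contra hne
      have := hper.minimalPeriod_le (Nat.pos_of_ne_zero hne)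
      omega
    have : k % (m : ℤ) = 0 := by omega
    exact Int.dvd_of_emod_eq_zero this
  · rintro ⟨q, rfl⟩
    rw [zpow_mul]
    exact hcm.zpow_left q

/-- The centrality condition for `(c, z)` is equivalent to `z` witnessing a regular
cycle of `classTrans c`. -/
lemma cond_iff (hfin : (conjClass e).Finite) (c z : conjClass e) :
    (∀ k : ℤ, (c : G) ^ k * z = z * (c : G) ^ k →
        ∀ x ∈ conjClass e, (c : G) ^ k * x = x * (c : G) ^ k) ↔
      (∀ x : conjClass e, Function.minimalPeriod ⇑(classTrans c) x ∣
        Function.minimalPeriod ⇑(classTrans c) z) := by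
  constructor
  · intro h x
    have hz : (c : G) ^ ((Function.minimalPeriod ⇑(classTrans c) z : ℤ)) * z
        = (z : G) * (c : G) ^ ((Function.minimalPeriod ⇑(classTrans c) z : ℤ)) :=
      (commute_zpow_iff hfin c z _).mpr dvd_rfl
    have hx := h _ hz x x.2
    have := (commute_zpow_iff hfin c x _).mp hx
    exact_mod_cast this
  · intro h k hk x hx
    have hdz := (commute_zpow_iff hfin c z k).mp hk
    exact (commute_zpow_iff hfin c ⟨x, hx⟩ k).mpr
      ((Int.natCast_dvd_natCast.mpr (h ⟨x, hx⟩)).trans hdz)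

lemma conj_mem (a : G) {x : G} (hx : x ∈ conjClass e) : a * x * a⁻¹ ∈ conjClass e := by
  obtain ⟨g, rfl⟩ := hx
  exact ⟨a * g, by group⟩

end Aux

theorem conjClass_regularCycle_tfae {G : Type*} [Group G] (e : G)
    (hfin : (conjClass e).Finite) :
    List.TFAE [
      -- (i) some left translation contains a regular cycle
      ∃ c : conjClass e, ContainsRegularCycle (classTrans c),
      -- (ii) some pair c, z witnesses the centrality condition
      ∃ c z : conjClass e, ∀ k : ℤ, (c : G) ^ k * z = z * (c : G) ^ k →
        ∀ x ∈ conjClass e, (c : G) ^ k * x = x * (c : G) ^ k,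
      -- (iii) every c has a witness z for the centrality condition
      ∀ c : conjClass e, ∃ z : conjClass e, ∀ k : ℤ, (c : G) ^ k * z = z * (c : G) ^ k →
        ∀ x ∈ conjClass e, (c : G) ^ k * x = x * (c : G) ^ k,
      -- (iv) every left translation contains a regular cycle (Hayashi property)
      ∀ c : conjClass e, ContainsRegularCycle (classTrans c)] := by
  tfae_have 1 ↔ 2 := by
    constructor
    · rintro ⟨c, z, hz⟩
      exact ⟨c, z, (cond_iff hfin c z).mpr hz⟩
    · rintro ⟨c, z, hz⟩
      exact ⟨c, z, (cond_iff hfin c z).mp hz⟩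
  tfae_have 3 ↔ 4 := by
    constructor
    · intro h c
      obtain ⟨z, hz⟩ := h c
      exact ⟨z, (cond_iff hfin c z).mp hz⟩
    · intro h c
      obtain ⟨z, hz⟩ := h c
      exact ⟨z, (cond_iff hfin c z).mpr hz⟩
  tfae_have 2 → 3 := by
    rintro ⟨c, z, h⟩ c'
    -- write c' = a * c * a⁻¹
    obtain ⟨g, hg⟩ := c.2
    obtain ⟨g', hg'⟩ := c'.2
    set a : G := g' * g⁻¹ with ha
    have hc' : (c' : G) = a * c * a⁻¹ := by
      rw [← hg, ← hg', ha]; group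
    refine ⟨⟨a * z * a⁻¹, conj_mem a z.2⟩, ?_⟩
    intro k hk x hx
    rw [hc'] at hk ⊢
    rw [conj_zpow] at hk ⊢
    have hzk : (c : G) ^ k * z = (z : G) * (c : G) ^ k := by
      have : a * (c : G) ^ k * a⁻¹ * (a * z * a⁻¹) = a * z * a⁻¹ * (a * (c : G) ^ k * a⁻¹) := hk
      have h2 : a * ((c : G) ^ k * z) * a⁻¹ = a * ((z : G) * (c : G) ^ k) * a⁻¹ := by
        rw [show a * ((c : G) ^ k * z) * a⁻¹ = a * (c : G) ^ k * a⁻¹ * (a * z * a⁻¹) by group,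
          show a * ((z : G) * (c : G) ^ k) * a⁻¹ = a * z * a⁻¹ * (a * (c : G) ^ k * a⁻¹) by group]
        exact this
      have := mul_left_cancel (mul_right_cancel h2)
      exact this
    have hmem : a⁻¹ * x * a ∈ conjClass e := by
      have := conj_mem a⁻¹ hx
      simpa using this
    have hcx : (c : G) ^ k * (a⁻¹ * x * a) = (a⁻¹ * x * a) * (c : G) ^ k :=
      h k hzk _ hmem
    calc a * (c : G) ^ k * a⁻¹ * x
        = a * ((c : G) ^ k * (a⁻¹ * x * a)) * a⁻¹ := by group
      _ = a * ((a⁻¹ * x * a) * (c : G) ^ k) * a⁻¹ := by rw [hcx]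
      _ = x * (a * (c : G) ^ k * a⁻¹) := by group
  tfae_have 3 → 2 := by
    intro h
    have he : e ∈ conjClass e := ⟨1, by group⟩
    obtain ⟨z, hz⟩ := h ⟨e, he⟩
    exact ⟨⟨e, he⟩, z, hz⟩
  tfae_finish
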